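/- arXiv:1910.13954 — 2 statements merged into one kernel-verified Lean document; each statement's English description precedes it below -/
import Mathlib

section
/- Let ψ⁽¹⁾, ψ⁽⁰⁾ be square-integrable random vectors in ℝ^q defined on the same probability space as a discrete random variable S, with E[π ψ⁽¹⁾ + (1−π) ψ⁽⁰⁾] = 0. Define C = π E[ψ⁽¹⁾ ψ⁽¹⁾ᵗ] + (1−π) E[ψ⁽⁰⁾ ψ⁽⁰⁾ᵗ] and D = π E[Var(ψ⁽¹⁾|S)] + (1−π) E[Var(ψ⁽⁰⁾|S)] + E[ E[πψ⁽¹⁾+(1−π)ψ⁽⁰⁾|S] · E[πψ⁽¹⁾+(1−π)ψ⁽⁰⁾|S]ᵗ ]. Then C − D = π(1−π) · E[ E[ψ⁽¹⁾ − ψ⁽⁰⁾ | S] · E[ψ⁽¹⁾ − ψ⁽⁰⁾ | S]ᵗ ]. In particular, C − D is positive semidefinite. -/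
open MeasureTheory ProbabilityTheory

/-- A real function measurable w.r.t. the comap of a map into a finite type is in L². -/
lemma memℒp_two_of_measurable_comap {Ω 𝒮 : Type*} [MeasurableSpace Ω] [MeasurableSpace 𝒮]
    [Finite 𝒮] (μ : Measure Ω) [IsFiniteMeasure μ] (S : Ω → 𝒮) {g : Ω → ℝ}
    (hg : Measurable[MeasurableSpace.comap S inferInstance] g)
    (hgm : AEStronglyMeasurable g μ) : MemLp g 2 μ := by
  have hpre : ∀ c : ℝ, ∃ A : Set 𝒮, S ⁻¹' A = g ⁻¹' {c} := by
    intro c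
    obtain ⟨A, -, hA⟩ := hg (measurableSet_singleton c)
    exact ⟨A, hA⟩
  choose ψ hψ using hpre
  have hfin : (Set.range g).Finite := by
    have hinj : Set.InjOn ψ (Set.range g) := by
      rintro c ⟨ω, rfl⟩ c' ⟨ω', rfl⟩ h
      have h2 : g ⁻¹' {g ω} = g ⁻¹' {g ω'} := by rw [← hψ, ← hψ, h]
      have hmem : ω ∈ g ⁻¹' {g ω'} := h2 ▸ rfl
      exact Set.mem_singleton_iff.mp hmem
    exact Set.Finite.of_finite_image (Set.toFinite _) hinj
  obtain ⟨CC, hCC⟩ := (hfin.image fun x => |x|).bddAbove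
  have hbound : ∀ ω, ‖g ω‖ ≤ CC := fun ω =>
    hCC ⟨g ω, ⟨ω, rfl⟩, rfl⟩
  exact (memLp_top_of_bound hgm CC (Filter.Eventually.of_forall hbound)).mono_exponent
    le_top

lemma integrable_mul_of_memℒp_two {Ω : Type*} [MeasurableSpace Ω] {μ : Measure Ω} {f g : Ω → ℝ}
    (hf : MemLp f 2 μ) (hg : MemLp g 2 μ) : Integrable (fun ω => f ω * g ω) μ := by
  have h : MemLp (f • g) 1 μ := hg.smul hf
  exact (memLp_one_iff_integrable.mp h).congr (Filter.Eventually.of_forall fun ω => rfl)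

/-- For square-integrable random vectors `ψ⁽¹⁾, ψ⁽⁰⁾` in `ℝ^q` with
`E[π ψ⁽¹⁾ + (1-π) ψ⁽⁰⁾] = 0`, and
`C = π E[ψ⁽¹⁾ψ⁽¹⁾ᵗ] + (1-π) E[ψ⁽⁰⁾ψ⁽⁰⁾ᵗ]`,
`D = π E[Var(ψ⁽¹⁾|S)] + (1-π) E[Var(ψ⁽⁰⁾|S)] + E[E[πψ⁽¹⁾+(1-π)ψ⁽⁰⁾|S]·E[πψ⁽¹⁾+(1-π)ψ⁽⁰⁾|S]ᵗ]`,
we have `C - D = π(1-π) E[E[ψ⁽¹⁾-ψ⁽⁰⁾|S]·E[ψ⁽¹⁾-ψ⁽⁰⁾|S]ᵗ]`; in particular `C - D`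
is positive semidefinite. -/
theorem variance_decomposition_matrix
    {Ω 𝒮 : Type*} [MeasurableSpace Ω] [MeasurableSpace 𝒮] [Fintype 𝒮]
    (μ : Measure Ω) [IsProbabilityMeasure μ]
    (S : Ω → 𝒮) (hS : Measurable S) (hSpos : ∀ s, 0 < μ {ω | S ω = s})
    (q : ℕ) (ψ1 ψ0 : Ω → Fin q → ℝ)
    (h2 : ∀ i, MemLp (fun ω => ψ1 ω i) 2 μ ∧ MemLp (fun ω => ψ0 ω i) 2 μ)
    (π : ℝ) (hπ : 0 < π ∧ π < 1)
    (hmean : ∀ i, ∫ ω, (π * ψ1 ω i + (1 - π) * ψ0 ω i) ∂μ = 0)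
    (mS : MeasurableSpace Ω) (hmS : mS = MeasurableSpace.comap S inferInstance)
    (C D : Matrix (Fin q) (Fin q) ℝ)
    (hC : ∀ i j, C i j = π * ∫ ω, ψ1 ω i * ψ1 ω j ∂μ
        + (1 - π) * ∫ ω, ψ0 ω i * ψ0 ω j ∂μ)
    (hD : ∀ i j, D i j =
        π * (∫ ω, ψ1 ω i * ψ1 ω j ∂μ
            - ∫ ω, (μ[fun ω => ψ1 ω i|mS]) ω * (μ[fun ω => ψ1 ω j|mS]) ω ∂μ)
      + (1 - π) * (∫ ω, ψ0 ω i * ψ0 ω j ∂μ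
            - ∫ ω, (μ[fun ω => ψ0 ω i|mS]) ω * (μ[fun ω => ψ0 ω j|mS]) ω ∂μ)
      + ∫ ω, (μ[fun ω => π * ψ1 ω i + (1 - π) * ψ0 ω i|mS]) ω *
             (μ[fun ω => π * ψ1 ω j + (1 - π) * ψ0 ω j|mS]) ω ∂μ) :
    (∀ i j, (C - D) i j = π * (1 - π) *
        ∫ ω, (μ[fun ω => ψ1 ω i - ψ0 ω i|mS]) ω * (μ[fun ω => ψ1 ω j - ψ0 ω j|mS]) ω ∂μ)
    ∧ (C - D).PosSemidef := by
  subst hmS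
  set f : Fin q → Ω → ℝ :=
    fun i => μ[fun ω => ψ1 ω i|MeasurableSpace.comap S inferInstance] with hf
  set g : Fin q → Ω → ℝ :=
    fun i => μ[fun ω => ψ0 ω i|MeasurableSpace.comap S inferInstance] with hg
  have hψ1i : ∀ i, Integrable (fun ω => ψ1 ω i) μ := fun i => ((h2 i).1).integrable one_le_two
  have hψ0i : ∀ i, Integrable (fun ω => ψ0 ω i) μ := fun i => ((h2 i).2).integrable one_le_two
  have hm : MeasurableSpace.comap S inferInstance ≤ ‹MeasurableSpace Ω› := hS.comap_le
  have hcondL2 : ∀ u : Ω → ℝ, MemLp (μ[u|MeasurableSpace.comap S inferInstance]) 2 μ := by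
    intro u
    refine memℒp_two_of_measurable_comap μ S ?_ ?_
    · exact (stronglyMeasurable_condExp (μ := μ) (f := u) (m := MeasurableSpace.comap S inferInstance)).measurable
    · exact ((stronglyMeasurable_condExp (μ := μ) (f := u) (m := MeasurableSpace.comap S inferInstance)).mono
        hm).aestronglyMeasurable
  have hfL2 : ∀ i, MemLp (f i) 2 μ := fun i => hcondL2 _
  have hgL2 : ∀ i, MemLp (g i) 2 μ := fun i => hcondL2 _
  have hdL2 : ∀ i, MemLp (fun ω => f i ω - g i ω) 2 μ := fun i => (hfL2 i).sub (hgL2 i)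
  have hff : ∀ i j, Integrable (fun ω => f i ω * f j ω) μ := fun i j =>
    integrable_mul_of_memℒp_two (hfL2 i) (hfL2 j)
  have hgg : ∀ i j, Integrable (fun ω => g i ω * g j ω) μ := fun i j =>
    integrable_mul_of_memℒp_two (hgL2 i) (hgL2 j)
  have hdd : ∀ i j, Integrable (fun ω => (f i ω - g i ω) * (f j ω - g j ω)) μ := fun i j =>
    integrable_mul_of_memℒp_two (hdL2 i) (hdL2 j)
  have hadd : ∀ i, μ[fun ω => π * ψ1 ω i + (1 - π) * ψ0 ω i|MeasurableSpace.comap S inferInstance]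
      =ᵐ[μ] fun ω => π * f i ω + (1 - π) * g i ω := by
    intro i
    have h1 : μ[fun ω => π * ψ1 ω i + (1 - π) * ψ0 ω i|MeasurableSpace.comap S inferInstance]
        =ᵐ[μ] μ[fun ω => π * ψ1 ω i|MeasurableSpace.comap S inferInstance] + μ[fun ω => (1 - π) * ψ0 ω i|MeasurableSpace.comap S inferInstance] :=
      condExp_add ((hψ1i i).const_mul π) ((hψ0i i).const_mul (1 - π)) _
    have h2a : μ[fun ω => π * ψ1 ω i|MeasurableSpace.comap S inferInstance] =ᵐ[μ] π • μ[fun ω => ψ1 ω i|MeasurableSpace.comap S inferInstance] :=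
      condExp_smul π (fun ω => ψ1 ω i) _
    have h2b : μ[fun ω => (1 - π) * ψ0 ω i|MeasurableSpace.comap S inferInstance] =ᵐ[μ] (1 - π) • μ[fun ω => ψ0 ω i|MeasurableSpace.comap S inferInstance] :=
      condExp_smul (1 - π) (fun ω => ψ0 ω i) _
    filter_upwards [h1, h2a, h2b] with ω e1 e2 e3
    simp only [Pi.add_apply, Pi.smul_apply, smul_eq_mul] at e1 e2 e3 ⊢
    simp only [e1, e2, e3, hf, hg]
  have hsub : ∀ i, μ[fun ω => ψ1 ω i - ψ0 ω i|MeasurableSpace.comap S inferInstance] =ᵐ[μ] fun ω => f i ω - g i ω := by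
    intro i
    have h1 : μ[fun ω => ψ1 ω i - ψ0 ω i|MeasurableSpace.comap S inferInstance]
        =ᵐ[μ] μ[fun ω => ψ1 ω i|MeasurableSpace.comap S inferInstance] - μ[fun ω => ψ0 ω i|MeasurableSpace.comap S inferInstance] :=
      condExp_sub (hψ1i i) (hψ0i i) _
    filter_upwards [h1] with ω e1
    simpa [hf, hg] using e1
  have key : ∀ i j, (C - D) i j
      = π * (1 - π) * ∫ ω, (f i ω - g i ω) * (f j ω - g j ω) ∂μ := by
    intro i j
    have hcombo : ∫ ω, (μ[fun ω => π * ψ1 ω i + (1 - π) * ψ0 ω i|MeasurableSpace.comap S inferInstance]) ω *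
          (μ[fun ω => π * ψ1 ω j + (1 - π) * ψ0 ω j|MeasurableSpace.comap S inferInstance]) ω ∂μ
        = ∫ ω, (π * f i ω + (1 - π) * g i ω) * (π * f j ω + (1 - π) * g j ω) ∂μ := by
      refine integral_congr_ae ?_
      filter_upwards [hadd i, hadd j] with ω e1 e2
      rw [e1, e2]
    have hB : Integrable (fun ω => (1 - π) * (g i ω * g j ω)
        - π * (1 - π) * ((f i ω - g i ω) * (f j ω - g j ω))) μ :=
      ((hgg i j).const_mul (1 - π)).sub ((hdd i j).const_mul (π * (1 - π)))
    have hptw : (fun ω => (π * f i ω + (1 - π) * g i ω) * (π * f j ω + (1 - π) * g j ω))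
        = fun ω => π * (f i ω * f j ω) + ((1 - π) * (g i ω * g j ω)
            - π * (1 - π) * ((f i ω - g i ω) * (f j ω - g j ω))) :=
      funext fun ω => by ring
    have hexpand : ∫ ω, (π * f i ω + (1 - π) * g i ω) * (π * f j ω + (1 - π) * g j ω) ∂μ
        = π * (∫ ω, f i ω * f j ω ∂μ) + (1 - π) * (∫ ω, g i ω * g j ω ∂μ)
          - π * (1 - π) * ∫ ω, (f i ω - g i ω) * (f j ω - g j ω) ∂μ := by
      rw [hptw, integral_add ((hff i j).const_mul π) hB,
        integral_sub ((hgg i j).const_mul (1 - π)) ((hdd i j).const_mul (π * (1 - π))),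
        integral_const_mul, integral_const_mul, integral_const_mul]
      ring
    simp only [Matrix.sub_apply]
    rw [hC, hD, hcombo, hexpand]
    simp only [hf, hg]
    ring
  have hint_eq : ∀ i j, ∫ ω, (μ[fun ω => ψ1 ω i - ψ0 ω i|MeasurableSpace.comap S inferInstance]) ω *
        (μ[fun ω => ψ1 ω j - ψ0 ω j|MeasurableSpace.comap S inferInstance]) ω ∂μ
      = ∫ ω, (f i ω - g i ω) * (f j ω - g j ω) ∂μ := by
    intro i j
    refine integral_congr_ae ?_
    filter_upwards [hsub i, hsub j] with ω e1 e2
    rw [e1, e2]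
  refine ⟨fun i j => by rw [hint_eq i j]; exact key i j, Matrix.PosSemidef.of_dotProduct_mulVec_nonneg ?_ ?_⟩
  · -- Hermitian
    ext i j
    simp only [Matrix.conjTranspose_apply, star_trivial]
    rw [key j i, key i j]
    congr 1
    exact integral_congr_ae (Filter.Eventually.of_forall fun ω => mul_comm _ _)
  · -- quadratic form nonneg
    intro x
    have hstar : star x = x := funext fun i => rfl
    have hq : dotProduct (star x) ((C - D).mulVec x)
        = π * (1 - π) * ∑ i, ∑ j, (x i * x j) *
            ∫ ω, (f i ω - g i ω) * (f j ω - g j ω) ∂μ := by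
      rw [hstar]
      simp only [dotProduct, Matrix.mulVec]
      rw [Finset.mul_sum]
      refine Finset.sum_congr rfl fun i _ => ?_
      rw [Finset.mul_sum, Finset.mul_sum]
      refine Finset.sum_congr rfl fun j _ => ?_
      rw [key i j]
      ring
    have hsq : ∫ ω, (∑ i, x i * (f i ω - g i ω)) * (∑ j, x j * (f j ω - g j ω)) ∂μ
        = ∑ i, ∑ j, (x i * x j) * ∫ ω, (f i ω - g i ω) * (f j ω - g j ω) ∂μ := by
      have hptw : (fun ω => (∑ i, x i * (f i ω - g i ω)) * (∑ j, x j * (f j ω - g j ω)))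
          = fun ω => ∑ i, ∑ j, (x i * x j) * ((f i ω - g i ω) * (f j ω - g j ω)) := by
        funext ω
        rw [Finset.sum_mul_sum]
        exact Finset.sum_congr rfl fun i _ => Finset.sum_congr rfl fun j _ => by ring
      rw [hptw, integral_finset_sum _ fun i _ =>
        integrable_finset_sum _ fun j _ => (hdd i j).const_mul _]
      refine Finset.sum_congr rfl fun i _ => ?_
      rw [integral_finset_sum _ fun j _ => (hdd i j).const_mul _]
      exact Finset.sum_congr rfl fun j _ => integral_const_mul _ _
    rw [show (dotProduct (star x) ((C - D).mulVec x)) =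
      dotProduct (star x) ((C - D).mulVec x) from rfl]
    rw [hq, ← hsq]
    have h1 : 0 ≤ ∫ ω, (∑ i, x i * (f i ω - g i ω)) * (∑ j, x j * (f j ω - g j ω)) ∂μ :=
      integral_nonneg fun ω => mul_self_nonneg _
    have hπ2 : 0 < π * (1 - π) := mul_pos hπ.1 (by linarith [hπ.2])
    positivity
end

section
/- (WLLN with random sample size.) Let Z_1, Z_2, … be i.i.d. integrable real random variables with mean μ, and let N_n be positive-integer-valued random variables independent of (Z_i)_{i≥1} such that N_n/n → c in probability for a constant c > 0. Then (1/n) Σ_{i=1}^{N_n} Z_i → cμ in probability. -/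
open MeasureTheory ProbabilityTheory Filter Topology ENNReal

/-- WLLN with random sample size: for i.i.d. integrable `Z_i` with mean `m` and
positive-integer-valued `N_n` independent of the `Z_i` with `N_n/n → c > 0` in
probability, `(1/n) Σ_{i=1}^{N_n} Z_i → c·m` in probability. -/
theorem wlln_random_sample_size
    {Ω : Type*} [MeasurableSpace Ω]
    (μ : Measure Ω) [IsProbabilityMeasure μ]
    (Z : ℕ → Ω → ℝ) (hZmeas : ∀ i, Measurable (Z i))
    (hindep : iIndepFun Z μ)
    (hident : ∀ i, IdentDistrib (Z i) (Z 0) μ μ)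
    (hint : Integrable (Z 0) μ) (m : ℝ) (hm : ∫ ω, Z 0 ω ∂μ = m)
    (N : ℕ → Ω → ℕ) (hNpos : ∀ n ω, 0 < N n ω)
    (c : ℝ) (hc : 0 < c)
    (hNindep : Indep (⨆ n, MeasurableSpace.comap (N n) inferInstance)
        (⨆ i, MeasurableSpace.comap (Z i) inferInstance) μ)
    (hNc : TendstoInMeasure μ (fun (n : ℕ) ω => (N n ω : ℝ) / n) atTop (fun _ => c)) :
    TendstoInMeasure μ (fun (n : ℕ) ω => (1 / (n : ℝ)) * ∑ i ∈ Finset.range (N n ω), Z i ω)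
      atTop (fun _ => c * m) := by
  classical
  have hSmeas : ∀ k : ℕ, Measurable (fun ω => ∑ i ∈ Finset.range k, Z i ω) :=
    fun k => Finset.measurable_sum _ (fun i _ => hZmeas i)
  have hSLLN : ∀ᵐ ω ∂μ,
      Tendsto (fun k : ℕ => (∑ i ∈ Finset.range k, Z i ω) / k) atTop (𝓝 m) := by
    have := strong_law_ae_real Z hint (fun i j hij => hindep.indepFun hij) hident
    rwa [show (μ[Z 0]) = m from hm] at this
  rw [tendstoInMeasure_iff_dist] at hNc ⊢
  intro ε hε
  set ε₁ : ℝ := ε / (2 * (c + 1)) with hε₁def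
  have hε₁ : 0 < ε₁ := by positivity
  set ε₂ : ℝ := min 1 (ε / (2 * (|m| + 1))) with hε₂def
  have hε₂ : 0 < ε₂ := lt_min one_pos (by positivity)
  set E : ℕ → Set Ω :=
    fun K => {ω | ∃ k, K ≤ k ∧ ε₁ ≤ dist ((∑ i ∈ Finset.range k, Z i ω) / k) m} with hE
  have hEmeas : ∀ K, MeasurableSet (E K) := by
    intro K
    have : E K = ⋃ k, ⋃ _ : K ≤ k,
        {ω | ε₁ ≤ dist ((∑ i ∈ Finset.range k, Z i ω) / k) m} := by
      ext ω; simp [hE]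
    rw [this]
    exact MeasurableSet.iUnion fun k => MeasurableSet.iUnion fun _ =>
      measurableSet_le measurable_const (((hSmeas k).div_const _).dist measurable_const)
  have hEanti : Antitone E := by
    intro K₁ K₂ h ω hω
    obtain ⟨k, hk, hd⟩ := hω
    exact ⟨k, le_trans h hk, hd⟩
  have hEtendsto : Tendsto (fun K => μ (E K)) atTop (𝓝 0) := by
    have h0 : μ (⋂ K, E K) = 0 := by
      apply measure_mono_null _ ((ae_iff).1 hSLLN)
      intro ω hω
      simp only [Set.mem_setOf_eq]
      intro hcv
      obtain ⟨K, hK⟩ := (Metric.tendsto_atTop.1 hcv) ε₁ hε₁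
      obtain ⟨k, hk, hd⟩ := Set.mem_iInter.1 hω K
      exact absurd hd (not_le.2 (hK k hk))
    have := tendsto_measure_iInter_atTop
      (fun K => (hEmeas K).nullMeasurableSet) hEanti ⟨0, measure_ne_top μ _⟩
    rwa [h0] at this
  have hNK : ∀ K : ℕ, Tendsto (fun n => μ {ω | N n ω ≤ K}) atTop (𝓝 0) := by
    intro K
    have h2 := hNc (c / 2) (half_pos hc)
    apply tendsto_of_tendsto_of_tendsto_of_le_of_le' tendsto_const_nhds h2
    · exact Eventually.of_forall (fun n => zero_le)
    · filter_upwards [eventually_ge_atTop (max 1 ⌈2 * (K : ℝ) / c⌉₊)] with n hn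
      apply measure_mono
      intro ω hω
      have hωK : (N n ω : ℝ) ≤ K := by exact_mod_cast hω
      have hn1 : (1 : ℕ) ≤ n := le_trans (le_max_left _ _) hn
      have hnpos : (0 : ℝ) < n := by exact_mod_cast hn1
      have hnc : (2 * (K : ℝ) / c) ≤ n := by
        calc (2 * (K : ℝ) / c) ≤ ⌈2 * (K : ℝ) / c⌉₊ := Nat.le_ceil _
        _ ≤ n := by exact_mod_cast le_trans (le_max_right _ _) hn
      have h2K : (2 * (K : ℝ)) ≤ n * c := (div_le_iff₀ hc).mp hnc
      have hNn : (N n ω : ℝ) / n ≤ c / 2 := by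
        rw [div_le_iff₀ hnpos]; nlinarith
      have hNnn : (0 : ℝ) ≤ (N n ω : ℝ) / n := by positivity
      show c / 2 ≤ dist ((N n ω : ℝ) / n) c
      rw [Real.dist_eq, abs_sub_comm, abs_of_nonneg (by linarith)]
      linarith
  rw [ENNReal.tendsto_atTop_zero]
  intro δ hδ
  have hδ3 : (0 : ℝ≥0∞) < δ / 3 := ENNReal.div_pos (ne_of_gt hδ) (by norm_num)
  obtain ⟨K, hK⟩ := (ENNReal.tendsto_atTop_zero.1 hEtendsto) (δ / 3) hδ3
  have hK3 : μ (E K) ≤ δ / 3 := hK K le_rfl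
  obtain ⟨N₁, hN₁⟩ := (ENNReal.tendsto_atTop_zero.1 (hNc ε₂ hε₂)) (δ / 3) hδ3
  obtain ⟨N₂, hN₂⟩ := (ENNReal.tendsto_atTop_zero.1 (hNK K)) (δ / 3) hδ3
  refine ⟨max (max N₁ N₂) 1, fun n hn => ?_⟩
  have hn1 : (1 : ℕ) ≤ n := le_trans (le_max_right _ _) hn
  have hnpos : (0 : ℝ) < n := by exact_mod_cast hn1
  have hincl :
      {ω | ε ≤ dist ((1 / (n : ℝ)) * ∑ i ∈ Finset.range (N n ω), Z i ω) (c * m)} ⊆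
      E K ∪ {ω | ε₂ ≤ dist ((N n ω : ℝ) / n) c} ∪ {ω | N n ω ≤ K} := by
    intro ω hω
    rw [Set.mem_union, Set.mem_union]
    by_contra hcon
    push_neg at hcon
    obtain ⟨⟨h1, h2⟩, h3⟩ := hcon
    have h3' : K < N n ω := not_le.1 h3
    have h2' : dist ((N n ω : ℝ) / n) c < ε₂ := not_le.1 h2
    have h1' : dist ((∑ i ∈ Finset.range (N n ω), Z i ω) / (N n ω)) m < ε₁ := by
      by_contra hd
      exact h1 ⟨N n ω, le_of_lt h3', not_lt.1 hd⟩
    set k : ℕ := N n ω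
    set T : ℝ := ∑ i ∈ Finset.range k, Z i ω with hT
    have hk0 : 0 < k := hNpos n ω
    have hkR : (0 : ℝ) < k := by exact_mod_cast hk0
    set a : ℝ := (k : ℝ) / n with ha
    have ha0 : 0 < a := by positivity
    have hn0 : (n : ℝ) ≠ 0 := ne_of_gt hnpos
    have hk0' : (k : ℝ) ≠ 0 := ne_of_gt hkR
    have hid : (1 / (n : ℝ)) * T - c * m = a * (T / k - m) + m * (a - c) := by
      rw [ha]
      field_simp
      ring
    rw [Real.dist_eq] at h2'
    rw [Real.dist_eq] at h1'
    have hac : a ≤ c + 1 := by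
      have := abs_lt.1 h2'
      have : a - c < ε₂ := this.2
      have hle : ε₂ ≤ 1 := min_le_left _ _
      linarith
    have hterm1 : a * |T / k - m| < (c + 1) * ε₁ := by
      calc a * |T / k - m| < a * ε₁ := by
            exact mul_lt_mul_of_pos_left h1' ha0
        _ ≤ (c + 1) * ε₁ := by nlinarith
    have hc1 : (c + 1) * ε₁ = ε / 2 := by
      rw [hε₁def]; field_simp
    have hterm2 : |m| * |a - c| ≤ ε / 2 := by
      have hle2 : ε₂ ≤ ε / (2 * (|m| + 1)) := min_le_right _ _
      have h1 : |m| * |a - c| ≤ |m| * ε₂ :=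
        mul_le_mul_of_nonneg_left (le_of_lt h2') (abs_nonneg m)
      have h2 : |m| * ε₂ ≤ |m| * (ε / (2 * (|m| + 1))) :=
        mul_le_mul_of_nonneg_left hle2 (abs_nonneg m)
      have h3 : |m| * (ε / (2 * (|m| + 1))) ≤ ε / 2 := by
        rw [mul_comm, div_mul_eq_mul_div, div_le_div_iff₀ (by positivity) (by norm_num)]
        nlinarith [abs_nonneg m, le_of_lt hε]
      linarith
    have hfinal : dist ((1 / (n : ℝ)) * T) (c * m) < ε := by
      rw [Real.dist_eq, hid]
      calc |a * (T / k - m) + m * (a - c)|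
          ≤ |a * (T / k - m)| + |m * (a - c)| := abs_add_le _ _
        _ = a * |T / k - m| + |m| * |a - c| := by
            rw [abs_mul, abs_mul, abs_of_pos ha0]
        _ < ε / 2 + ε / 2 := by
            have := hterm1
            rw [hc1] at this
            linarith
        _ = ε := by ring
    rw [Set.mem_setOf_eq] at hω
    exact absurd hω (not_le.2 hfinal)
  calc μ {ω | ε ≤ dist ((1 / (n : ℝ)) * ∑ i ∈ Finset.range (N n ω), Z i ω) (c * m)}
      ≤ μ (E K ∪ {ω | ε₂ ≤ dist ((N n ω : ℝ) / n) c} ∪ {ω | N n ω ≤ K}) :=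
        measure_mono hincl
    _ ≤ μ (E K ∪ {ω | ε₂ ≤ dist ((N n ω : ℝ) / n) c}) + μ {ω | N n ω ≤ K} :=
        measure_union_le _ _
    _ ≤ μ (E K) + μ {ω | ε₂ ≤ dist ((N n ω : ℝ) / n) c} + μ {ω | N n ω ≤ K} :=
        add_le_add_left (measure_union_le _ _) _
    _ ≤ δ / 3 + δ / 3 + δ / 3 :=
        add_le_add (add_le_add hK3
          (hN₁ n (le_trans (le_trans (le_max_left _ _) (le_max_left _ _)) hn)))
          (hN₂ n (le_trans (le_trans (le_max_right _ _) (le_max_left _ _)) hn))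
    _ = δ := ENNReal.add_thirds δ
end
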